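/- arXiv:2508.11185 — 3 statements merged into one kernel-verified Lean document; each statement's English description precedes it below -/
import Mathlib

section
/- Under the hypotheses f > 0, z > 0, vb - cv > 0, ΔH ≥ 0, and H - b₂ = z(vb - cv)/f with z > H - b₂ > 0, the ground-based depth estimate ẑ = f(H + ΔH - b₂)/(vb + fΔH/z - cv) satisfies ẑ ≥ z, i.e., the ground model over-estimates depth when the camera height increases. -/
/-- Ground model over-estimates depth when the camera height increases. -/
theorem ground_depth_overestimates
    (f z vb cv H b₂ ΔH : ℝ) (hf : 0 < f) (hz : 0 < z) (hvb : 0 < vb - cv)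
    (hΔH : 0 ≤ ΔH) (hexact : H - b₂ = z * (vb - cv) / f)
    (hzbig : H - b₂ < z) (hpos : 0 < H - b₂) :
    z ≤ f * (H + ΔH - b₂) / (vb + f * ΔH / z - cv) := by
  have hden : 0 < vb + f * ΔH / z - cv := by
    have : 0 ≤ f * ΔH / z := by positivity
    linarith
  rw [le_div_iff₀ hden]
  have hH : f * (H - b₂) = z * (vb - cv) := by
    field_simp at hexact; linarith
  field_simp
  nlinarith [hH]
end

section
/- Under the hypotheses f > 0, z > 0, vb - cv > 0, ΔH ≤ 0 with z(vb - cv) + fΔH > 0, and H - b₂ = z(vb - cv)/f with z > H - b₂ > 0, the ground-based depth estimate ẑ = f(H + ΔH - b₂)/(vb + fΔH/z - cv) satisfies ẑ ≤ z, i.e., the ground model under-estimates depth when the camera height decreases. -/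
/-- Ground model under-estimates depth when the camera height decreases. -/
theorem ground_depth_underestimates
    (f z vb cv H b₂ ΔH : ℝ) (hf : 0 < f) (hz : 0 < z) (hvb : 0 < vb - cv)
    (hΔH : ΔH ≤ 0) (hden : 0 < z * (vb - cv) + f * ΔH)
    (hexact : H - b₂ = z * (vb - cv) / f)
    (hzbig : H - b₂ < z) (hpos : 0 < H - b₂) :
    f * (H + ΔH - b₂) / (vb + f * ΔH / z - cv) ≤ z := by
  have hd : vb + f * ΔH / z - cv = (z * (vb - cv) + f * ΔH) / z := by
    field_simp; ring
  have hnum : f * (H + ΔH - b₂) = z * (vb - cv) + f * ΔH := by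
    have : H - b₂ = z * (vb - cv) / f := hexact
    field_simp at this ⊢
    nlinarith [this]
  rw [hd, hnum, div_div_eq_mul_div, mul_comm, mul_div_assoc,
    div_self hden.ne', mul_one]
end

section
/- Tilted-ground error trend: assume f > 0, z > 0, δ ∈ (-π/2, π/2), D := (vb - cv)cos δ + f sin δ > 0, and exactness at train height: H - b₂ cos δ - b₃ sin δ = zD/f. Define ẑ = f(H + ΔH - b₂ cos δ - b₃ sin δ)/((vb + fΔH/z - cv)cos δ + f sin δ), and assume zD + fΔH cos δ ≠ 0. Then ẑ = z(zD + fΔH)/(zD + fΔH cos δ) and ẑ - z = fΔH z(1 - cos δ)/(zD + fΔH cos δ). -/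
/-- Tilted-ground error trend: with `D = (vb - cv) cos δ + f sin δ > 0` and
exactness at train height, the tilted-ground estimate satisfies
`zhat = z (zD + fΔH)/(zD + fΔH cos δ)` and
`zhat - z = fΔH z (1 - cos δ)/(zD + fΔH cos δ)`. -/
theorem tilted_ground_error_trend
    (f z vb cv H b₂ b₃ δ ΔH : ℝ) (hf : 0 < f) (hz : 0 < z)
    (hδ : δ ∈ Set.Ioo (-(Real.pi / 2)) (Real.pi / 2))
    (D : ℝ) (hD : D = (vb - cv) * Real.cos δ + f * Real.sin δ) (hDpos : 0 < D)
    (hexact : H - b₂ * Real.cos δ - b₃ * Real.sin δ = z * D / f)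
    (hden : z * D + f * ΔH * Real.cos δ ≠ 0)
    (zhat : ℝ)
    (hzhat : zhat = f * (H + ΔH - b₂ * Real.cos δ - b₃ * Real.sin δ) /
        ((vb + f * ΔH / z - cv) * Real.cos δ + f * Real.sin δ)) :
    zhat = z * (z * D + f * ΔH) / (z * D + f * ΔH * Real.cos δ) ∧
    zhat - z = f * ΔH * z * (1 - Real.cos δ) / (z * D + f * ΔH * Real.cos δ) := by
  have hnum : H + ΔH - b₂ * Real.cos δ - b₃ * Real.sin δ = z * D / f + ΔH := by
    linarith
  have hden2 : (vb + f * ΔH / z - cv) * Real.cos δ + f * Real.sin δ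
      = (z * D + f * ΔH * Real.cos δ) / z := by
    field_simp
    rw [hD]; ring
  have h1 : zhat = z * (z * D + f * ΔH) / (z * D + f * ΔH * Real.cos δ) := by
    rw [hzhat, hnum, hden2]
    field_simp
  refine ⟨h1, ?_⟩
  rw [h1]
  field_simp
  ring
end
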